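/- arXiv:1604.02970 — 5 statements merged into one kernel-verified Lean document; each statement's English description precedes it below -/
import Mathlib

section
/- Let d ≥ 2 and let p_0, …, p_d be real polynomials with deg p_n = n and positive leading coefficient, orthonormal with respect to a nonnegative weight function w on ℝ (i.e. ∫ℝ p_i(x) p_j(x) w(x) dx = δ_{ij} for 0 ≤ i, j ≤ d). Let x_0, …, x_{d−1} be the d distinct real zeros of p_d and let α ∈ ℝ. Define v¹_j = (p_0(x_j), p_1(x_j), …, p_{d−1}(x_j)) ∈ ℂ^d and v²_j = (p_0(x_j), e^{iα} p_1(x_j), …, e^{i(d−1)α} p_{d−1}(x_j)) ∈ ℂ^d for j = 0, …, d−1. Then the normalized vectors { v¹_j / ‖v¹_j‖ : j = 0, …, d−1 } form an orthonormal basis of ℂ^d, and so do { v²_j / ‖v²_j‖ : j = 0, …, d−1 }. -/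
open Matrix ComplexOrder Polynomial MeasureTheory

/-- The Euclidean norm of a vector in `ℂ^d`. -/
noncomputable def euclNorm {d : ℕ} (v : Fin d → ℂ) : ℝ :=
  Real.sqrt (∑ k, Complex.normSq (v k))

/-- The vector `v¹_j = (p₀(x_j), …, p_{d-1}(x_j))`. -/
noncomputable def vOne (p : ℕ → Polynomial ℝ) {d : ℕ} (x : Fin d → ℝ) (j : Fin d) :
    Fin d → ℂ :=
  fun k => (((p (k : ℕ)).eval (x j) : ℝ) : ℂ)

/-- The vector `v²_j = (p₀(x_j), e^{iα} p₁(x_j), …, e^{i(d-1)α} p_{d-1}(x_j))`. -/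
noncomputable def vTwo (p : ℕ → Polynomial ℝ) (α : ℝ) {d : ℕ} (x : Fin d → ℝ) (j : Fin d) :
    Fin d → ℂ :=
  fun k => Complex.exp (((k : ℕ) : ℂ) * α * Complex.I) * (((p (k : ℕ)).eval (x j) : ℝ) : ℂ)

/-- The vector `v³_j = (p₀(y_j), …, p_{d-2}(y_j), 0)` for `j ≤ d-2`, and
`v³_{d-1} = e_{d-1}`. -/
noncomputable def vThree (p : ℕ → Polynomial ℝ) {d : ℕ} (y : Fin (d - 1) → ℝ) (j : Fin d) :
    Fin d → ℂ :=
  if h : (j : ℕ) < d - 1 then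
    fun k => if (k : ℕ) < d - 1 then (((p (k : ℕ)).eval (y ⟨(j : ℕ), h⟩) : ℝ) : ℂ) else 0
  else fun k => if (k : ℕ) = d - 1 then 1 else 0

/-- The vector `v⁴_j = (p₀(y_j), e^{iα} p₁(y_j), …, e^{i(d-2)α} p_{d-2}(y_j), 0)` for
`j ≤ d-2`, and `v⁴_{d-1} = e_{d-1}`. -/
noncomputable def vFour (p : ℕ → Polynomial ℝ) (α : ℝ) {d : ℕ} (y : Fin (d - 1) → ℝ)
    (j : Fin d) : Fin d → ℂ :=
  if h : (j : ℕ) < d - 1 then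
    fun k => if (k : ℕ) < d - 1 then
      Complex.exp (((k : ℕ) : ℂ) * α * Complex.I) * (((p (k : ℕ)).eval (y ⟨(j : ℕ), h⟩) : ℝ) : ℂ)
    else 0
  else fun k => if (k : ℕ) = d - 1 then 1 else 0

/-- The normalization `v / ‖v‖` of a vector `v ∈ ℂ^d`. -/
noncomputable def normalized {d : ℕ} (v : Fin d → ℂ) : Fin d → ℂ :=
  fun k => ((euclNorm v : ℝ) : ℂ)⁻¹ * v k

/-- A family of `d` vectors in `ℂ^d` is an orthonormal basis: the vectors are orthonormal
(w.r.t. the inner product conjugate-linear in the first argument) and they span `ℂ^d`. -/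
def IsONB {d : ℕ} (u : Fin d → Fin d → ℂ) : Prop :=
  (∀ i j, star (u i) ⬝ᵥ u j = if i = j then 1 else 0) ∧
    Submodule.span ℂ (Set.range u) = ⊤

/-- The outcome probability of the (unnormalized) basis vector `v` on the vector state `ψ`
coincides with its outcome probability on the state `ρ`:
`|⟨v|ψ⟩|² = ⟨v|ρ|v⟩`. -/
def probEq {d : ℕ} (v ψ : Fin d → ℂ) (ρ : Matrix (Fin d) (Fin d) ℂ) : Prop :=
  ((Complex.normSq (star v ⬝ᵥ ψ) : ℝ) : ℂ) = star v ⬝ᵥ ρ.mulVec v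


lemma expandPoly (p : ℕ → Polynomial ℝ) (d : ℕ) (hdeg : ∀ n ≤ d, (p n).natDegree = n)
    (hlead : ∀ n ≤ d, 0 < (p n).leadingCoeff) :
    ∀ m, m ≤ d → ∀ q : Polynomial ℝ, q.natDegree ≤ m →
      ∃ c : ℕ → ℝ, q = ∑ n ∈ Finset.range (m+1), c n • p n := by
  intro m
  induction m with
  | zero =>
    intro _ q hq
    have h0 : (p 0).natDegree = 0 := hdeg 0 (by omega)
    have hc0 : (p 0).coeff 0 ≠ 0 := by
      have := hlead 0 (by omega)
      rw [leadingCoeff, h0] at this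
      exact this.ne'
    refine ⟨fun _ => q.coeff 0 / (p 0).coeff 0, ?_⟩
    rw [Finset.sum_range_one]
    rw [Polynomial.eq_C_of_natDegree_le_zero hq, Polynomial.eq_C_of_natDegree_le_zero h0.le]
    rw [Polynomial.coeff_C_zero, smul_C]
    simp only [coeff_C_zero]
    congr 1
    rw [smul_eq_mul, div_mul_cancel₀ _ hc0]
  | succ m ih =>
    intro hm q hq
    have hdm : (p (m+1)).natDegree = m + 1 := hdeg (m+1) hm
    have hLne : (p (m+1)).coeff (m+1) ≠ 0 := by
      have := hlead (m+1) hm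
      rw [leadingCoeff, hdm] at this
      exact this.ne'
    set a : ℝ := q.coeff (m+1) / (p (m+1)).coeff (m+1) with ha
    have hq' : (q - a • p (m+1)).natDegree ≤ m := by
      rw [Polynomial.natDegree_le_iff_coeff_eq_zero]
      intro n hn
      rcases Nat.lt_or_ge (m+1) n with h | h
      · rw [Polynomial.coeff_sub, Polynomial.coeff_smul, smul_eq_mul]
        rw [Polynomial.coeff_eq_zero_of_natDegree_lt (lt_of_le_of_lt hq h),
          Polynomial.coeff_eq_zero_of_natDegree_lt (by omega : (p (m+1)).natDegree < n)]
        ring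
      · have hn1 : n = m + 1 := by omega
        subst hn1
        rw [Polynomial.coeff_sub, Polynomial.coeff_smul, smul_eq_mul, ha,
          div_mul_cancel₀ _ hLne, sub_self]
    obtain ⟨c, hc⟩ := ih (by omega) _ hq'
    refine ⟨fun n => if n = m + 1 then a else c n, ?_⟩
    rw [Finset.sum_range_succ]
    simp only [if_pos rfl]
    have : ∑ n ∈ Finset.range (m+1), (if n = m + 1 then a else c n) • p n
        = ∑ n ∈ Finset.range (m+1), c n • p n := by
      refine Finset.sum_congr rfl fun n hn => ?_
      rw [if_neg (by simp at hn; omega)]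
    rw [this, ← hc]
    simp

lemma span_of_gram {d : ℕ} (hd : 0 < d) (u : Fin d → Fin d → ℂ)
    (hg : ∀ i j, star (u i) ⬝ᵥ u j = if i = j then 1 else 0) :
    Submodule.span ℂ (Set.range u) = ⊤ := by
  have : Nonempty (Fin d) := ⟨⟨0, hd⟩⟩
  have hli : LinearIndependent ℂ u := by
    rw [Fintype.linearIndependent_iff]
    intro g hg0 i
    have h := congrArg (fun v => star (u i) ⬝ᵥ v) hg0
    simp only [dotProduct, Finset.sum_apply, Pi.smul_apply, smul_eq_mul, Finset.mul_sum,
      Pi.zero_apply, mul_zero, Finset.sum_const_zero] at h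
    rw [Finset.sum_comm] at h
    have h2 : ∀ j : Fin d, ∑ k, star (u i) k * (g j * u j k) = g j * (star (u i) ⬝ᵥ u j) := by
      intro j; rw [dotProduct, Finset.mul_sum]; congr 1 with k; ring
    simp_rw [h2, hg] at h
    simpa using h
  exact hli.span_eq_top_of_card_eq_finrank (by simp)

lemma onb_helper {d : ℕ} (hd : 0 < d) (r : Fin d → Fin d → ℝ) (φ : Fin d → ℂ)
    (hφ : ∀ k, Complex.normSq (φ k) = 1)
    (hperp : ∀ i j, i ≠ j → ∑ k, r i k * r j k = 0)
    (hne : ∀ j, ∃ k, r j k ≠ 0) :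
    IsONB (fun j => normalized (fun k => φ k * (r j k : ℂ))) := by
  set N : Fin d → ℝ := fun j => Real.sqrt (∑ k, r j k * r j k) with hNdef
  have hNsq : ∀ j, N j * N j = ∑ k, r j k * r j k := by
    intro j
    exact Real.mul_self_sqrt (Finset.sum_nonneg fun k _ => mul_self_nonneg _)
  have hNpos : ∀ j, 0 < N j := by
    intro j
    apply Real.sqrt_pos.2
    obtain ⟨k, hk⟩ := hne j
    exact Finset.sum_pos' (fun k _ => mul_self_nonneg _) ⟨k, Finset.mem_univ k, mul_self_pos.2 hk⟩
  have hN : ∀ j, euclNorm (fun k => φ k * (r j k : ℂ)) = N j := by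
    intro j
    unfold euclNorm
    congr 1
    refine Finset.sum_congr rfl fun k _ => ?_
    rw [Complex.normSq_mul, hφ k, Complex.normSq_ofReal, one_mul]
  have gram : ∀ i j, star (normalized (fun k => φ k * ((r i k : ℝ) : ℂ))) ⬝ᵥ
      (normalized (fun k => φ k * ((r j k : ℝ) : ℂ))) = if i = j then 1 else 0 := by
    intro i j
    have key : ∀ k, star (normalized (fun k => φ k * ((r i k : ℝ) : ℂ))) k *
        (normalized (fun k => φ k * ((r j k : ℝ) : ℂ))) k
        = ((N i : ℝ) : ℂ)⁻¹ * ((N j : ℝ) : ℂ)⁻¹ * ((r i k * r j k : ℝ) : ℂ) := by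
      intro k
      simp only [normalized, hN, Pi.star_apply, star_mul', RCLike.star_def, map_inv₀,
        Complex.conj_ofReal]
      have hconj : (starRingEnd ℂ) (φ k) * φ k = 1 := by
        rw [mul_comm, Complex.mul_conj, hφ k, Complex.ofReal_one]
      calc (↑(N i))⁻¹ * ((starRingEnd ℂ) (φ k) * ((r i k : ℝ):ℂ)) *
            ((↑(N j))⁻¹ * (φ k * ((r j k : ℝ):ℂ)))
          = (↑(N i))⁻¹ * (↑(N j))⁻¹ * (((starRingEnd ℂ) (φ k) * φ k) *
            (((r i k : ℝ):ℂ) * ((r j k : ℝ):ℂ))) := by ring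
        _ = _ := by rw [hconj]; push_cast; ring
    rw [dotProduct]
    simp_rw [key]
    rw [← Finset.mul_sum, ← Complex.ofReal_sum]
    by_cases hij : i = j
    · subst hij
      simp only [if_pos rfl]
      rw [← hNsq i]
      have hNne : ((N i : ℝ) : ℂ) ≠ 0 := by
        exact_mod_cast Complex.ofReal_ne_zero.2 (hNpos i).ne'
      push_cast
      field_simp
    · rw [hperp i j hij, if_neg hij]
      simp
  refine ⟨gram, span_of_gram hd _ gram⟩

lemma main_perp (d : ℕ) (hd : 2 ≤ d) (p : ℕ → Polynomial ℝ)
    (hdeg : ∀ n ≤ d, (p n).natDegree = n)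
    (hlead : ∀ n ≤ d, 0 < (p n).leadingCoeff)
    (w : ℝ → ℝ) (hw : ∀ t, 0 ≤ w t)
    (horth : ∀ i ≤ d, ∀ j ≤ d,
      (∫ t : ℝ, (p i).eval t * (p j).eval t * w t) = if i = j then 1 else 0)
    (x : Fin d → ℝ) (hxinj : Function.Injective x)
    (hxroot : ∀ j, (p d).eval (x j) = 0) :
    ∀ i j : Fin d, i ≠ j →
      ∑ k : Fin d, (p (k:ℕ)).eval (x i) * (p (k:ℕ)).eval (x j) = 0 := by
  -- p 0 is a nonzero constant
  have h00 : (p 0).natDegree = 0 := hdeg 0 (by omega)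
  have hc0pos : 0 < (p 0).coeff 0 := by
    have := hlead 0 (by omega); rwa [leadingCoeff, h00] at this
  have hp0 : ∀ t, (p 0).eval t = (p 0).coeff 0 := by
    intro t
    conv_lhs => rw [Polynomial.eq_C_of_natDegree_le_zero h00.le]
    rw [eval_C]
  -- integrability of diagonal terms
  have hIntDiag : ∀ i ≤ d, Integrable (fun t => (p i).eval t * (p i).eval t * w t) := by
    intro i hi
    by_contra h
    have := horth i hi i hi
    rw [MeasureTheory.integral_undef h] at this
    simp at this
  -- w is a.e. strongly measurable
  have hwm : AEStronglyMeasurable w (volume : Measure ℝ) := by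
    have h := (hIntDiag 0 (by omega)).aestronglyMeasurable
    have hrw : w = fun t => ((p 0).coeff 0 * (p 0).coeff 0)⁻¹ *
        ((p 0).eval t * (p 0).eval t * w t) := by
      funext t
      rw [hp0]
      field_simp
    rw [hrw]
    exact h.const_mul _
  -- pairwise integrability
  have hIntPair : ∀ i ≤ d, ∀ j ≤ d,
      Integrable (fun t => (p i).eval t * (p j).eval t * w t) := by
    intro i hi j hj
    refine MeasureTheory.Integrable.mono' ((hIntDiag i hi).add (hIntDiag j hj)) ?_ ?_
    · exact (((p i).continuous.mul (p j).continuous).aestronglyMeasurable).mul hwm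
    · filter_upwards with t
      have h1 : ‖(p i).eval t * (p j).eval t * w t‖
          = |(p i).eval t| * |(p j).eval t| * w t := by
        rw [Real.norm_eq_abs, abs_mul, abs_mul, abs_of_nonneg (hw t)]
      rw [h1]
      have h2 : |(p i).eval t| * |(p j).eval t| ≤
          (p i).eval t * (p i).eval t + (p j).eval t * (p j).eval t := by
        nlinarith [sq_nonneg (|(p i).eval t| - |(p j).eval t|), abs_nonneg ((p i).eval t),
          abs_nonneg ((p j).eval t), abs_mul_abs_self ((p i).eval t),
          abs_mul_abs_self ((p j).eval t)]
      have := mul_le_mul_of_nonneg_right h2 (hw t)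
      simp only [Pi.add_apply]
      nlinarith [hw t]
  -- the key integral identity
  have key : ∀ (c : ℕ → ℝ) (k : ℕ), k ≤ d →
      (∫ t : ℝ, (∑ n ∈ Finset.range (d+1), c n * (p n).eval t) * (p k).eval t * w t)
        = c k := by
    intro c k hk
    have hrw : ∀ t : ℝ, (∑ n ∈ Finset.range (d+1), c n * (p n).eval t) * (p k).eval t * w t
        = ∑ n ∈ Finset.range (d+1), c n * ((p n).eval t * (p k).eval t * w t) := by
      intro t
      rw [Finset.sum_mul, Finset.sum_mul]
      refine Finset.sum_congr rfl fun n _ => ?_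
      ring
    simp_rw [hrw]
    rw [MeasureTheory.integral_finset_sum _ (fun n hn => by
      refine ((hIntPair n ?_ k hk).const_mul _)
      simp only [Finset.mem_range] at hn; omega)]
    have hterm : ∀ n ∈ Finset.range (d+1),
        (∫ t : ℝ, c n * ((p n).eval t * (p k).eval t * w t)) = if n = k then c n else 0 := by
      intro n hn
      simp only [Finset.mem_range] at hn
      rw [integral_const_mul, horth n (by omega) k hk]
      split <;> simp
    rw [Finset.sum_congr rfl hterm, Finset.sum_ite_eq' (Finset.range (d+1)) k c,
      if_pos (Finset.mem_range.2 (by omega))]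
  -- expansion of X * p k
  have hcc : ∀ k : Fin d, ∃ c : ℕ → ℝ,
      (X : Polynomial ℝ) * p (k:ℕ) = ∑ n ∈ Finset.range (d+1), c n • p n := by
    intro k
    refine expandPoly p d hdeg hlead d le_rfl _ ?_
    refine le_trans natDegree_mul_le ?_
    rw [natDegree_X, hdeg (k:ℕ) (le_of_lt k.2)]
    omega
  choose c hc using hcc
  have heval : ∀ (k : Fin d) (t : ℝ), t * (p (k:ℕ)).eval t
      = ∑ n ∈ Finset.range (d+1), c k n * (p n).eval t := by
    intro k t
    have := congrArg (Polynomial.eval t) (hc k)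
    rw [eval_mul, eval_X, eval_finset_sum] at this
    simpa [smul_eq_mul] using this
  -- integral values
  have hval : ∀ (k : Fin d) (n : ℕ), n ≤ d →
      (∫ t : ℝ, t * (p (k:ℕ)).eval t * (p n).eval t * w t) = c k n := by
    intro k n hn
    rw [← key (c k) n hn]
    congr 1
    funext t
    rw [← heval k t]
  -- symmetry
  have hsym : ∀ k n : Fin d, c k (n:ℕ) = c n (k:ℕ) := by
    intro k n
    rw [← hval k n (le_of_lt n.2), ← hval n k (le_of_lt k.2)]
    congr 1
    funext t
    ring
  -- eigen relation
  have heig : ∀ (j k : Fin d), x j * (p (k:ℕ)).eval (x j)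
      = ∑ n : Fin d, c k (n:ℕ) * (p (n:ℕ)).eval (x j) := by
    intro j k
    rw [heval k (x j), Finset.sum_range_succ, hxroot j, mul_zero, add_zero,
      ← Fin.sum_univ_eq_sum_range (fun n => c k n * (p n).eval (x j)) d]
  -- orthogonality
  intro i j hij
  set S := ∑ k : Fin d, (p (k:ℕ)).eval (x i) * (p (k:ℕ)).eval (x j) with hS
  have h1 : x i * S = x j * S := by
    calc x i * S = ∑ k : Fin d, (x i * (p (k:ℕ)).eval (x i)) * (p (k:ℕ)).eval (x j) := by
          rw [hS, Finset.mul_sum]; refine Finset.sum_congr rfl fun k _ => by ring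
      _ = ∑ k : Fin d, (∑ n : Fin d, c k (n:ℕ) * (p (n:ℕ)).eval (x i)) * (p (k:ℕ)).eval (x j) := by
          simp_rw [heig i]
      _ = ∑ k : Fin d, ∑ n : Fin d, c k (n:ℕ) * (p (n:ℕ)).eval (x i) * (p (k:ℕ)).eval (x j) := by
          refine Finset.sum_congr rfl fun k _ => ?_
          rw [Finset.sum_mul]
      _ = ∑ n : Fin d, ∑ k : Fin d, c k (n:ℕ) * (p (n:ℕ)).eval (x i) * (p (k:ℕ)).eval (x j) :=
          Finset.sum_comm
      _ = ∑ n : Fin d, (∑ k : Fin d, c n (k:ℕ) * (p (k:ℕ)).eval (x j)) * (p (n:ℕ)).eval (x i) := by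
          refine Finset.sum_congr rfl fun n _ => ?_
          rw [Finset.sum_mul]
          refine Finset.sum_congr rfl fun k _ => ?_
          rw [hsym k n]; ring
      _ = ∑ n : Fin d, (x j * (p (n:ℕ)).eval (x j)) * (p (n:ℕ)).eval (x i) := by
          simp_rw [← heig j]
      _ = x j * S := by
          rw [hS, Finset.mul_sum]; refine Finset.sum_congr rfl fun n _ => by ring
  have h2 : (x i - x j) * S = 0 := by
    rw [sub_mul, h1, sub_self]
  rcases mul_eq_zero.1 h2 with h | h
  · exact absurd (sub_eq_zero.1 h) (fun heq => hij (hxinj heq))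
  · exact h


theorem stmt1 (d : ℕ) (hd : 2 ≤ d) (p : ℕ → Polynomial ℝ)
    (hdeg : ∀ n ≤ d, (p n).natDegree = n)
    (hlead : ∀ n ≤ d, 0 < (p n).leadingCoeff)
    (w : ℝ → ℝ) (hw : ∀ t, 0 ≤ w t)
    (horth : ∀ i ≤ d, ∀ j ≤ d,
      (∫ t : ℝ, (p i).eval t * (p j).eval t * w t) = if i = j then 1 else 0)
    (x : Fin d → ℝ) (hxinj : Function.Injective x)
    (hxroot : ∀ j, (p d).eval (x j) = 0)
    (α : ℝ) :
    IsONB (fun j => normalized (vOne p x j)) ∧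
      IsONB (fun j => normalized (vTwo p α x j)) := by
  have hperp := main_perp d hd p hdeg hlead w hw horth x hxinj hxroot
  set r : Fin d → Fin d → ℝ := fun j k => (p (k:ℕ)).eval (x j) with hr
  have hne : ∀ j, ∃ k, r j k ≠ 0 := by
    intro j
    refine ⟨⟨0, by omega⟩, ?_⟩
    have h00 : (p 0).natDegree = 0 := hdeg 0 (by omega)
    have hc0pos : 0 < (p 0).coeff 0 := by
      have := hlead 0 (by omega)
      rwa [Polynomial.leadingCoeff, h00] at this
    have hev : (p 0).eval (x j) = (p 0).coeff 0 := by
      conv_lhs => rw [Polynomial.eq_C_of_natDegree_le_zero h00.le]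
      rw [Polynomial.eval_C]
    show (p ((0:ℕ))).eval (x j) ≠ 0
    rw [hev]
    exact hc0pos.ne'
  constructor
  · have h := onb_helper (by omega) r (fun _ => 1) (by simp) hperp hne
    have heq : (fun j => normalized (vOne p x j))
        = (fun j => normalized (fun k => (fun _ : Fin d => (1:ℂ)) k * ((r j k : ℝ) : ℂ))) := by
      funext j
      have hv : vOne p x j = (fun k => (fun _ : Fin d => (1:ℂ)) k * ((r j k : ℝ) : ℂ)) := by
        funext k
        simp [vOne, hr]
      rw [hv]
    rw [heq]
    exact h
  · set φ : Fin d → ℂ := fun k => Complex.exp (((k:ℕ):ℂ) * α * Complex.I) with hφdef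
    have hφ : ∀ k, Complex.normSq (φ k) = 1 := by
      intro k
      rw [hφdef, ← Complex.sq_norm, Complex.norm_exp]
      have hre : ((((k:ℕ):ℂ)) * (α:ℂ) * Complex.I).re = 0 := by simp
      rw [hre, Real.exp_zero, one_pow]
    have h := onb_helper (by omega) r φ hφ hperp hne
    have heq : (fun j => normalized (vTwo p α x j))
        = (fun j => normalized (fun k => φ k * ((r j k : ℝ) : ℂ))) := by
      funext j
      have hv : vTwo p α x j = (fun k => φ k * ((r j k : ℝ) : ℂ)) := by
        funext k
        simp [vTwo, hr, hφdef]
      rw [hv]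
    rw [heq]
    exact h
end

section
/- Let d ≥ 2 and let p_0, …, p_d be real polynomials with deg p_n = n and positive leading coefficient, orthonormal with respect to a nonnegative weight function w on ℝ (i.e. ∫ℝ p_i(x) p_j(x) w(x) dx = δ_{ij} for 0 ≤ i, j ≤ d). Let y_0, …, y_{d−2} be the d−1 distinct real zeros of p_{d−1} and let α ∈ ℝ. Define v³_j = (p_0(y_j), …, p_{d−2}(y_j), 0) ∈ ℂ^d and v⁴_j = (p_0(y_j), e^{iα} p_1(y_j), …, e^{i(d−2)α} p_{d−2}(y_j), 0) ∈ ℂ^d for j = 0, …, d−2, and set v³_{d−1} = v⁴_{d−1} = e_{d−1}, the last standard basis vector of ℂ^d. Then the normalized vectors { v³_j / ‖v³_j‖ : j = 0, …, d−1 } form an orthonormal basis of ℂ^d, and so do { v⁴_j / ‖v⁴_j‖ : j = 0, …, d−1 }. -/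
open Matrix ComplexOrder Polynomial MeasureTheory

/-!
Write `n = d - 1`. The zeros `y_j` of `p_n` are the nodes of an `n`-point Gauss quadrature for
`w`: with the Lagrange weights `c_j = ∫ ℓ_j w`, one has `∫ f w = ∑ c_j f(y_j)` whenever
`deg f < 2n`, because `f = q p_n + r` with `deg q, deg r < n`, `q` is orthogonal to `p_n`, and `r`
is interpolated exactly at the `y_j`. Applied to `f = p_k p_m` this says `Mᵀ C M = 1` for the square
matrix `M_{jk} = p_k(y_j)` and `C = diag c`, hence also `C M Mᵀ = 1`: the vectors
`(p_0(y_j), …, p_{n-1}(y_j))` are pairwise orthogonal. The phases `e^{ikα}` cancel in the inner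
products, `e_{d-1}` is orthogonal to every vector with vanishing last entry, and no vector is zero
because `p_0` is a nonzero constant. Normalizing gives `d` orthonormal, hence spanning, vectors.
-/

namespace Polynomial

lemma eval_ne_zero_of_natDegree_eq_zero {R : Type*} [Semiring R] {q : R[X]}
    (hq : q.natDegree = 0) (hq0 : q ≠ 0) (x : R) : q.eval x ≠ 0 := by
  rw [eq_C_of_natDegree_eq_zero hq] at hq0 ⊢
  simpa using hq0

variable {K : Type*} [Field K]

lemma span_image_Iio_eq_degreeLT {n : ℕ} {p : ℕ → K[X]} (hdeg : ∀ k < n, (p k).degree = k) :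
    Submodule.span K (p '' Set.Iio n) = degreeLT K n := by
  let S : Sequence K := ⟨fun k => if k < n then p k else X ^ k, fun k => by
    split_ifs with hk
    · exact hdeg k hk
    · exact degree_X_pow k⟩
  have hS : S '' Set.Iio n = p '' Set.Iio n := Set.image_congr fun k hk => if_pos hk
  rw [← hS, S.span_degreeLT fun k _ => (leadingCoeff_ne_zero.mpr (S.ne_zero k)).isUnit]

lemma map_mul_eq_zero_of_degree_lt (L : K[X] →ₗ[K] K) {n : ℕ} {p : ℕ → K[X]}
    (hdeg : ∀ k < n, (p k).degree = k) {q : K[X]} (hq : ∀ k < n, L (p k * q) = 0) {f : K[X]}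
    (hf : f.degree < n) : L (f * q) = 0 := by
  have hle : degreeLT K n ≤ LinearMap.ker (L ∘ₗ LinearMap.mulRight K q) := by
    rw [← span_image_Iio_eq_degreeLT hdeg, Submodule.span_le]
    rintro _ ⟨k, hk, rfl⟩
    exact hq k hk
  exact hle (mem_degreeLT.mpr hf)

lemma map_eq_sum_eval_mul_map_basis (L : K[X] →ₗ[K] K) {ι : Type*} [DecidableEq ι]
    {s : Finset ι} {v : ι → K} (hvs : Set.InjOn v s) {f : K[X]} (hf : f.degree < s.card) :
    L f = ∑ i ∈ s, f.eval (v i) * L (Lagrange.basis s v i) := by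
  conv_lhs => rw [Lagrange.eq_interpolate hvs hf, Lagrange.interpolate_apply]
  simp [← smul_eq_C_mul]

theorem exists_weights_map_eq_sum_eval (L : K[X] →ₗ[K] K) {n : ℕ} {p : ℕ → K[X]}
    (hdeg : ∀ k ≤ n, (p k).degree = k) (hL : ∀ k < n, L (p k * p n) = 0) {y : Fin n → K}
    (hy : Function.Injective y) (hroot : ∀ j, (p n).eval (y j) = 0) :
    ∃ c : Fin n → K, ∀ f : K[X], f.degree < 2 * n → L f = ∑ j, f.eval (y j) * c j := by
  refine ⟨fun j => L (Lagrange.basis Finset.univ y j), fun f hf => ?_⟩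
  have hpn : p n ≠ 0 := fun h => by simpa [h] using hdeg n le_rfl
  set q := f / p n
  set r := f % p n
  have hfqr : p n * q + r = f := EuclideanDomain.div_add_mod f (p n)
  have hr : r.degree < n := hdeg n le_rfl ▸ degree_mod_lt f hpn
  have hq : q.degree < n := by
    by_cases hq0 : q = 0
    · simp [hq0]
    have hlt : (p n * q).degree < ↑(2 * n) := by
      rw [eq_sub_of_add_eq hfqr]
      refine (degree_sub_le f r).trans_lt (max_lt (by exact_mod_cast hf) (hr.trans_le ?_))
      exact_mod_cast (by omega : n ≤ 2 * n)
    rw [degree_mul, hdeg n le_rfl] at hlt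
    rw [degree_eq_natDegree hq0] at hlt ⊢
    have hlt' : n + q.natDegree < 2 * n := by exact_mod_cast hlt
    exact_mod_cast (by omega : q.natDegree < n)
  calc L f = L (q * p n) + L r := by rw [← map_add, mul_comm, hfqr]
    _ = ∑ j, r.eval (y j) * L (Lagrange.basis Finset.univ y j) := by
      rw [map_mul_eq_zero_of_degree_lt L (fun k hk => hdeg k hk.le) hL hq, zero_add]
      exact map_eq_sum_eval_mul_map_basis L hy.injOn (by simpa using hr)
    _ = ∑ j, f.eval (y j) * L (Lagrange.basis Finset.univ y j) := by
      simp_rw [← hfqr, eval_add, eval_mul, hroot, zero_mul, zero_add]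

theorem sum_eval_mul_eval_eq_zero_of_ne (L : K[X] →ₗ[K] K) {n : ℕ} {p : ℕ → K[X]}
    (hdeg : ∀ k ≤ n, (p k).degree = k)
    (hL : ∀ i ≤ n, ∀ j ≤ n, L (p i * p j) = if i = j then 1 else 0) {y : Fin n → K}
    (hy : Function.Injective y) (hroot : ∀ j, (p n).eval (y j) = 0) {i j : Fin n}
    (hij : i ≠ j) : ∑ k : Fin n, (p k).eval (y i) * (p k).eval (y j) = 0 := by
  obtain ⟨c, hc⟩ := exists_weights_map_eq_sum_eval L hdeg
    (fun k hk => by rw [hL k hk.le n le_rfl, if_neg hk.ne]) hy hroot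
  let M : Matrix (Fin n) (Fin n) K := Matrix.of fun j k => (p k).eval (y j)
  have hMDM : Mᵀ * Matrix.diagonal c * M = 1 := by
    ext k m
    have hkm : ((p k * p m).degree < 2 * n) := by
      rw [degree_mul, hdeg k k.2.le, hdeg m m.2.le]
      exact_mod_cast (by omega : (k : ℕ) + m < 2 * n)
    have hentry : (Mᵀ * Matrix.diagonal c * M) k m = L (p k * p m) := by
      rw [hc _ hkm, Matrix.mul_apply]
      simp only [Matrix.mul_diagonal, M, Matrix.transpose_apply, Matrix.of_apply, eval_mul]
      exact Finset.sum_congr rfl fun _ _ => by ring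
    simp only [hentry, hL k k.2.le m m.2.le, Matrix.one_apply, Fin.val_inj]
  have hDMM : Matrix.diagonal c * (M * Mᵀ) = 1 := by
    refine mul_eq_one_comm.mp ?_
    rw [Matrix.mul_assoc]
    exact mul_eq_one_comm.mp hMDM
  have hdiag := congr_fun₂ hDMM i i
  have hoff := congr_fun₂ hDMM i j
  rw [Matrix.diagonal_mul] at hdiag hoff
  simp only [Matrix.mul_apply, M, Matrix.transpose_apply, Matrix.of_apply,
    Matrix.one_apply_eq, Matrix.one_apply_ne hij] at hdiag hoff
  exact (mul_eq_zero.mp hoff).resolve_left (left_ne_zero_of_mul_eq_one hdiag)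

end Polynomial

section Integral

variable {Ω : Type*} [MeasurableSpace Ω] {μ : Measure Ω}

lemma integrable_mul_mul_of_integrable_mul_self {f g w : Ω → ℝ}
    (hf : AEStronglyMeasurable f μ) (hg : AEStronglyMeasurable g μ)
    (hw : AEStronglyMeasurable w μ) (hff : Integrable (fun t => f t * f t * w t) μ)
    (hgg : Integrable (fun t => g t * g t * w t) μ) :
    Integrable (fun t => f t * g t * w t) μ := by
  refine ((hff.abs.add hgg.abs).div_const 2).mono' ((hf.mul hg).mul hw)
    (Filter.Eventually.of_forall fun t => ?_)
  simp only [Pi.add_apply, Real.norm_eq_abs, abs_mul]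
  nlinarith [sq_nonneg (|f t| - |g t|), abs_nonneg (w t), abs_mul_abs_self (f t),
    abs_mul_abs_self (g t)]

end Integral

/-- The integral is additive only on integrable functions; extending it from the integrable
polynomials to all of `ℝ[X]` lets the quadrature argument run in pure linear algebra. -/
lemma Polynomial.exists_linearMap_eq_integral (μ : Measure ℝ) (w : ℝ → ℝ) :
    ∃ L : ℝ[X] →ₗ[ℝ] ℝ, ∀ f : ℝ[X], Integrable (fun t => f.eval t * w t) μ →
      L f = ∫ t, f.eval t * w t ∂μ := by
  let V : Submodule ℝ ℝ[X] :=
    { carrier := {f | Integrable (fun t => f.eval t * w t) μ}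
      add_mem' := fun {f g} hf hg => by
        simp only [Set.mem_ofPred_eq, eval_add, add_mul]
        exact hf.add hg
      zero_mem' := by simp
      smul_mem' := fun c f hf => by simpa [mul_assoc] using hf.const_mul c }
  let I : V →ₗ[ℝ] ℝ :=
    { toFun := fun f => ∫ t, (f : ℝ[X]).eval t * w t ∂μ
      map_add' := fun f g => by simpa [add_mul] using integral_add f.2 g.2
      map_smul' := fun c f => by simpa [mul_assoc] using integral_const_mul c _ }
  obtain ⟨L, hL⟩ := LinearMap.exists_extend I
  exact ⟨L, fun f hf => LinearMap.congr_fun hL ⟨f, hf⟩⟩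

theorem Polynomial.sum_eval_mul_eval_eq_zero_of_integral {n : ℕ} {p : ℕ → ℝ[X]} {w : ℝ → ℝ}
    (hdeg : ∀ k ≤ n, (p k).natDegree = k)
    (horth : ∀ i ≤ n, ∀ j ≤ n,
      (∫ t : ℝ, (p i).eval t * (p j).eval t * w t) = if i = j then 1 else 0)
    {y : Fin n → ℝ} (hy : Function.Injective y) (hroot : ∀ j, (p n).eval (y j) = 0)
    {i j : Fin n} (hij : i ≠ j) : ∑ k : Fin n, (p k).eval (y i) * (p k).eval (y j) = 0 := by
  have hsq : ∀ k ≤ n, Integrable (fun t => (p k).eval t * (p k).eval t * w t) := fun k hk =>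
    Integrable.of_integral_ne_zero (by simp [horth k hk k hk])
  have hne : ∀ k ≤ n, p k ≠ 0 := fun k hk h0 => by simpa [h0] using horth k hk k hk
  have hw : AEStronglyMeasurable w := by
    have hc := eval_ne_zero_of_natDegree_eq_zero (hdeg 0 n.zero_le) (hne 0 n.zero_le) 0
    have h0 := ((hsq 0 n.zero_le).aestronglyMeasurable).const_mul ((p 0).eval 0 ^ 2)⁻¹
    refine h0.congr (Filter.Eventually.of_forall fun t => ?_)
    rw [eq_C_of_natDegree_eq_zero (hdeg 0 n.zero_le)] at hc ⊢
    simp only [eval_C] at hc ⊢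
    field_simp
  obtain ⟨L, hL⟩ := exists_linearMap_eq_integral volume w
  refine sum_eval_mul_eval_eq_zero_of_ne L
    (fun k hk => degree_eq_iff_natDegree_eq (hne k hk) |>.mpr (hdeg k hk))
    (fun k hk m hm => ?_) hy hroot hij
  rw [hL, ← horth k hk m hm]
  · simp only [eval_mul]
  · simpa only [eval_mul] using integrable_mul_mul_of_integrable_mul_self
      (p k).continuous.aestronglyMeasurable (p m).continuous.aestronglyMeasurable hw
      (hsq k hk) (hsq m hm)

section Vectors

variable {d : ℕ}

lemma euclNorm_eq_norm (v : Fin d → ℂ) : euclNorm v = ‖WithLp.toLp 2 v‖ := by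
  simp [euclNorm, EuclideanSpace.norm_eq, Complex.normSq_eq_norm_sq]

lemma star_dotProduct_self (v : Fin d → ℂ) : star v ⬝ᵥ v = ((euclNorm v ^ 2 : ℝ) : ℂ) := by
  rw [euclNorm_eq_norm, dotProduct_comm, ← EuclideanSpace.inner_toLp_toLp,
    inner_self_eq_norm_sq_to_K]
  push_cast
  rfl

lemma euclNorm_ne_zero {v : Fin d → ℂ} (hv : v ≠ 0) : euclNorm v ≠ 0 := by
  rw [euclNorm_eq_norm, norm_ne_zero_iff]
  exact fun h => hv (by simpa using congr_arg WithLp.ofLp h)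

lemma star_normalized_dotProduct_normalized (u v : Fin d → ℂ) :
    star (normalized u) ⬝ᵥ normalized v =
      ((euclNorm u * euclNorm v : ℝ) : ℂ)⁻¹ * (star u ⬝ᵥ v) := by
  simp only [normalized, dotProduct, Pi.star_apply, star_mul', star_inv₀, Complex.star_def,
    Complex.conj_ofReal, Finset.mul_sum]
  push_cast
  exact Finset.sum_congr rfl fun _ _ => by ring

lemma isONB_of_star_dotProduct {u : Fin d → Fin d → ℂ}
    (h : ∀ i j, star (u i) ⬝ᵥ u j = if i = j then 1 else 0) : IsONB u := by
  refine ⟨h, ?_⟩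
  have hU : Matrix.of u * (Matrix.of u)ᴴ = 1 := by
    ext i j
    calc (Matrix.of u * (Matrix.of u)ᴴ) i j = star (u j) ⬝ᵥ u i := by
          rw [dotProduct_comm]; rfl
      _ = (1 : Matrix (Fin d) (Fin d) ℂ) i j := by
          rw [h, Matrix.one_apply]; exact if_congr eq_comm rfl rfl
  have hli : LinearIndependent ℂ u :=
    Matrix.linearIndependent_rows_iff_isUnit.mpr (IsUnit.of_mul_eq_one _ hU)
  exact hli.span_eq_top_of_card_eq_finrank' (by simp)

lemma isONB_normalized {v : Fin d → Fin d → ℂ} (hne : ∀ i, v i ≠ 0)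
    (horth : ∀ i j, i ≠ j → star (v i) ⬝ᵥ v j = 0) : IsONB fun i => normalized (v i) := by
  refine isONB_of_star_dotProduct fun i j => ?_
  rw [star_normalized_dotProduct_normalized]
  split_ifs with hij
  · subst hij
    have := euclNorm_ne_zero (hne i)
    rw [star_dotProduct_self]
    push_cast
    field_simp
  · rw [horth i j hij, mul_zero]

end Vectors

lemma Fin.sum_ite_val_lt {M : Type*} [AddCommMonoid M] {d N : ℕ} (hN : N ≤ d) (F : ℕ → M) :
    ∑ k : Fin d, (if (k : ℕ) < N then F k else 0) = ∑ k : Fin N, F k := by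
  rw [Fin.sum_univ_eq_sum_range (fun k => if k < N then F k else 0), Fin.sum_univ_eq_sum_range F,
    ← Finset.sum_filter]
  congr 1
  ext k
  simp only [Finset.mem_filter, Finset.mem_range]
  omega

section VFour

variable {p : ℕ → ℝ[X]} {d : ℕ} {y : Fin (d - 1) → ℝ}

lemma vThree_eq_vFour_zero (p : ℕ → ℝ[X]) (y : Fin (d - 1) → ℝ) : vThree p y = vFour p 0 y := by
  funext j k
  simp [vThree, vFour]

lemma star_vFour_dotProduct_vFour (α : ℝ) {i j : Fin d} (hi : (i : ℕ) < d - 1)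
    (hj : (j : ℕ) < d - 1) :
    star (vFour p α y i) ⬝ᵥ vFour p α y j =
      ((∑ k : Fin (d - 1), (p k).eval (y ⟨i, hi⟩) * (p k).eval (y ⟨j, hj⟩) : ℝ) : ℂ) := by
  have hphase : ∀ k : ℕ,
      star (Complex.exp (k * α * Complex.I)) * Complex.exp (k * α * Complex.I) = 1 := by
    simp [← Complex.normSq_eq_conj_mul_self, Complex.normSq_eq_norm_sq, Complex.norm_exp]
  simp only [vFour, dif_pos hi, dif_pos hj, dotProduct, Pi.star_apply]
  push_cast
  rw [← Fin.sum_ite_val_lt (Nat.sub_le d 1)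
    fun n => (((p n).eval (y ⟨i, hi⟩) : ℝ) : ℂ) * (((p n).eval (y ⟨j, hj⟩) : ℝ) : ℂ)]
  refine Finset.sum_congr rfl fun k _ => ?_
  split_ifs
  · rw [star_mul', mul_mul_mul_comm, hphase]
    simp
  · simp

lemma vFour_ne_zero (hp0 : ∀ t, (p 0).eval t ≠ 0) (α : ℝ) (j : Fin d) : vFour p α y j ≠ 0 := by
  intro h
  by_cases hj : (j : ℕ) < d - 1
  · have := congr_fun h ⟨0, by omega⟩
    simp [vFour, hj, hp0, show 1 < d by omega] at this
  · have := congr_fun h ⟨d - 1, by omega⟩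
    simp [vFour, hj] at this

lemma star_vFour_dotProduct_vFour_eq_zero
    (hS : ∀ i j : Fin (d - 1), i ≠ j → ∑ k : Fin (d - 1), (p k).eval (y i) * (p k).eval (y j) = 0)
    (α : ℝ) {i j : Fin d} (hij : i ≠ j) : star (vFour p α y i) ⬝ᵥ vFour p α y j = 0 := by
  by_cases hi : (i : ℕ) < d - 1 <;> by_cases hj : (j : ℕ) < d - 1
  · rw [star_vFour_dotProduct_vFour α hi hj, hS _ _ (by simpa [Fin.ext_iff] using hij),
      Complex.ofReal_zero]
  · simp only [vFour, dif_pos hi, dif_neg hj, dotProduct, Pi.star_apply]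
    refine Finset.sum_eq_zero fun k _ => ?_
    split_ifs <;> first | omega | simp
  · simp only [vFour, dif_neg hi, dif_pos hj, dotProduct, Pi.star_apply]
    refine Finset.sum_eq_zero fun k _ => ?_
    split_ifs <;> first | omega | simp
  · exact absurd (Fin.ext (by omega)) hij

theorem isONB_normalized_vFour (hp0 : ∀ t, (p 0).eval t ≠ 0)
    (hS : ∀ i j : Fin (d - 1), i ≠ j → ∑ k : Fin (d - 1), (p k).eval (y i) * (p k).eval (y j) = 0)
    (α : ℝ) : IsONB fun j => normalized (vFour p α y j) :=
  isONB_normalized (vFour_ne_zero hp0 α) fun _ _ => star_vFour_dotProduct_vFour_eq_zero hS α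

end VFour

theorem stmt3_general (d : ℕ) (p : ℕ → Polynomial ℝ)
    (hdeg : ∀ n ≤ d, (p n).natDegree = n)
    (w : ℝ → ℝ)
    (horth : ∀ i ≤ d, ∀ j ≤ d,
      (∫ t : ℝ, (p i).eval t * (p j).eval t * w t) = if i = j then 1 else 0)
    (y : Fin (d - 1) → ℝ) (hyinj : Function.Injective y)
    (hyroot : ∀ j, (p (d - 1)).eval (y j) = 0)
    (α : ℝ) :
    IsONB (fun j => normalized (vThree p y j)) ∧
      IsONB (fun j => normalized (vFour p α y j)) := by
  have hS : ∀ i j : Fin (d - 1), i ≠ j →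
      ∑ k : Fin (d - 1), (p k).eval (y i) * (p k).eval (y j) = 0 := fun i j hij =>
    sum_eval_mul_eval_eq_zero_of_integral (fun k hk => hdeg k (by omega))
      (fun k hk m hm => horth k (by omega) m (by omega)) hyinj hyroot hij
  have hp0 : ∀ t, (p 0).eval t ≠ 0 := eval_ne_zero_of_natDegree_eq_zero (hdeg 0 d.zero_le)
    fun h0 => by simpa [h0] using horth 0 d.zero_le 0 d.zero_le
  have hFour : ∀ β, IsONB fun j => normalized (vFour p β y j) := isONB_normalized_vFour hp0 hS
  exact ⟨vThree_eq_vFour_zero p y ▸ hFour 0, hFour α⟩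

theorem stmt3 (d : ℕ) (hd : 2 ≤ d) (p : ℕ → Polynomial ℝ)
    (hdeg : ∀ n ≤ d, (p n).natDegree = n)
    (hlead : ∀ n ≤ d, 0 < (p n).leadingCoeff)
    (w : ℝ → ℝ) (hw : ∀ t, 0 ≤ w t)
    (horth : ∀ i ≤ d, ∀ j ≤ d,
      (∫ t : ℝ, (p i).eval t * (p j).eval t * w t) = if i = j then 1 else 0)
    (y : Fin (d - 1) → ℝ) (hyinj : Function.Injective y)
    (hyroot : ∀ j, (p (d - 1)).eval (y j) = 0)
    (α : ℝ) :
    IsONB (fun j => normalized (vThree p y j)) ∧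
      IsONB (fun j => normalized (vFour p α y j)) :=
  stmt3_general d p hdeg w horth y hyinj hyroot α
end

section
/- A measurement scheme Q determines any pure state among all states if and only if every non-zero element X of the kernel of M_Q has at least two positive eigenvalues, i.e. λ₂(X) > 0, where λ₂(X) is the second largest eigenvalue of X. -/
open Matrix ComplexOrder

noncomputable def frobNorm {n m : Type*} [Fintype n] [Fintype m] {𝕜 : Type*} [RCLike 𝕜]
    (X : Matrix n m 𝕜) : ℝ :=
  Real.sqrt (∑ i, ∑ j, ‖X i j‖ ^ 2)

def IsPOVM {d m : ℕ} (P : Fin m → Matrix (Fin d) (Fin d) ℂ) : Prop :=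
  (∀ j, (P j).PosSemidef) ∧ (∑ j, P j) = 1

def IsMeasScheme {d l m : ℕ} (Q : Fin l → Fin m → Matrix (Fin d) (Fin d) ℂ) : Prop :=
  ∀ i, IsPOVM (Q i)

noncomputable def measMap {d l m : ℕ} (Q : Fin l → Fin m → Matrix (Fin d) (Fin d) ℂ)
    (X : Matrix (Fin d) (Fin d) ℂ) : Matrix (Fin l) (Fin m) ℝ :=
  Matrix.of fun i j => (Matrix.trace (X * Q i j)).re

noncomputable def pureState {d : ℕ} (ψ : Fin d → ℂ) : Matrix (Fin d) (Fin d) ℂ :=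
  Matrix.vecMulVec ψ (star ψ)

def IsState {d : ℕ} (ρ : Matrix (Fin d) (Fin d) ℂ) : Prop :=
  ρ.PosSemidef ∧ ρ.trace = 1

def DeterminesPure {d l m : ℕ} (Q : Fin l → Fin m → Matrix (Fin d) (Fin d) ℂ) : Prop :=
  ∀ ψ : Fin d → ℂ, (∑ k, Complex.normSq (ψ k)) = 1 →
    ∀ ρ : Matrix (Fin d) (Fin d) ℂ, IsState ρ →
      measMap Q (pureState ψ) = measMap Q ρ → ρ = pureState ψ

noncomputable def posEigCount {d : ℕ} {X : Matrix (Fin d) (Fin d) ℂ} (hX : X.IsHermitian) : ℕ :=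
  Nat.card {i : Fin d // 0 < hX.eigenvalues i}

def Kset (d : ℕ) : Set (Matrix (Fin d) (Fin d) ℂ) :=
  {X | ∃ hX : X.IsHermitian, posEigCount hX ≤ 1 ∧ frobNorm X = 1}

noncomputable def opNormHerm {d l m : ℕ}
    (T : Matrix (Fin d) (Fin d) ℂ → Matrix (Fin l) (Fin m) ℝ) : ℝ :=
  sSup {r : ℝ | ∃ X : Matrix (Fin d) (Fin d) ℂ, X.IsHermitian ∧ frobNorm X = 1 ∧ r = frobNorm (T X)}

/-!
If a state `ρ` has the same statistics as `|ψ⟩⟨ψ|`, then `Y = |ψ⟩⟨ψ| - ρ` lies in the kernel of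
`M_Q`; on `ψ^⊥` the form `w ↦ w* Y w = -w* ρ w` is nonpositive, and `ψ^⊥` meets every plane spanned
by two eigenvectors, so `Y` has at most one positive eigenvalue.

Conversely, a nonzero Hermitian `X` in the kernel is traceless, because each POVM sums to `I`; so it
has a positive eigenvalue `λ`, with unit eigenvector `v`. If all other eigenvalues are `≤ 0`, then
`|v⟩⟨v| - X / λ` is a state, diagonal in the eigenbasis of `X`, with the same statistics as the
pure state `|v⟩⟨v|` but different from it.
-/

section MeasurementMap

variable {d l m : ℕ} (Q : Fin l → Fin m → Matrix (Fin d) (Fin d) ℂ)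

lemma measMap_sub (A B : Matrix (Fin d) (Fin d) ℂ) :
    measMap Q (A - B) = measMap Q A - measMap Q B := by
  ext i j
  simp [measMap, sub_mul]

lemma measMap_real_smul (r : ℝ) (A : Matrix (Fin d) (Fin d) ℂ) :
    measMap Q (r • A) = r • measMap Q A := by
  ext i j
  simp [measMap]

variable {Q}

lemma sum_eigenvalues_eq_zero_of_measMap_eq_zero {i : Fin l} (hQi : ∑ j, Q i j = 1)
    {X : Matrix (Fin d) (Fin d) ℂ} (hX : X.IsHermitian) (hXQ : measMap Q X = 0) :
    ∑ k, hX.eigenvalues k = 0 := by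
  have htrace : X.trace = ∑ j, (X * Q i j).trace := by
    rw [← trace_sum, ← Finset.mul_sum, hQi, mul_one]
  have hre := congrArg Complex.re htrace
  rw [hX.trace_eq_sum_eigenvalues, Complex.re_sum, Complex.re_sum] at hre
  have hentry (j : Fin m) : (X * Q i j).trace.re = 0 := by
    simpa [measMap] using congrFun (congrFun hXQ i) j
  simpa [hentry] using hre

end MeasurementMap

lemma Matrix.IsHermitian.exists_eigenvalues_pos_of_sum_eq_zero {n 𝕜 : Type*} [Fintype n]
    [DecidableEq n] [RCLike 𝕜] {A : Matrix n n 𝕜} (hA : A.IsHermitian) (hA0 : A ≠ 0)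
    (hsum : ∑ i, hA.eigenvalues i = 0) : ∃ i, 0 < hA.eigenvalues i := by
  by_contra! hnonpos
  have hzero := (Finset.sum_eq_zero_iff_of_nonpos fun i _ => hnonpos i).1 hsum
  exact hA0 (hA.eigenvalues_eq_zero_iff.1 (funext fun i => hzero i (Finset.mem_univ i)))

lemma two_le_posEigCount_iff {d : ℕ} {X : Matrix (Fin d) (Fin d) ℂ} (hX : X.IsHermitian) :
    2 ≤ posEigCount hX ↔ ∃ i j, i ≠ j ∧ 0 < hX.eigenvalues i ∧ 0 < hX.eigenvalues j := by
  rw [posEigCount, Nat.card_eq_fintype_card]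
  change 1 < _ ↔ _
  rw [Fintype.one_lt_card_iff]
  simp only [ne_eq, Subtype.exists, Subtype.mk.injEq, exists_prop]
  grind

section PureState

variable {d : ℕ}

lemma pureState_isHermitian (ψ : Fin d → ℂ) : (pureState ψ).IsHermitian := by
  simpa [pureState] using posSemidef_vecMulVec_self_star ψ |>.isHermitian

lemma trace_pureState (ψ : Fin d → ℂ) :
    (pureState ψ).trace = ∑ k, (Complex.normSq (ψ k) : ℂ) := by
  simp [pureState, trace_vecMulVec, dotProduct, Complex.mul_conj]

lemma pureState_mulVec (ψ w : Fin d → ℂ) : pureState ψ *ᵥ w = (star ψ ⬝ᵥ w) • ψ := by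
  ext k
  simp only [pureState, mulVec, dotProduct, vecMulVec_apply, Pi.star_apply, Pi.smul_apply,
    smul_eq_mul, Finset.sum_mul]
  exact Finset.sum_congr rfl fun _ _ => by ring

lemma pureState_col (U : Matrix (Fin d) (Fin d) ℂ) (i : Fin d) :
    pureState (fun k => U k i) = U * diagonal (Pi.single i 1) * Uᴴ := by
  ext a b
  rw [mul_apply]
  simp [pureState, vecMulVec_apply, mul_diagonal, Pi.single_apply]

end PureState

namespace Matrix.IsHermitian

variable {d : ℕ} {X : Matrix (Fin d) (Fin d) ℂ} (hX : X.IsHermitian)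

lemma sum_normSq_eigenvectorBasis (i : Fin d) :
    ∑ k, Complex.normSq (hX.eigenvectorBasis i k) = 1 := by
  have hnorm := congrArg (· ^ 2) (hX.eigenvectorBasis.orthonormal.1 i)
  simp only [EuclideanSpace.norm_sq_eq, one_pow] at hnorm
  simpa [Complex.normSq_eq_norm_sq] using hnorm

lemma isState_pureState_sub_inv_smul (hsum : ∑ k, hX.eigenvalues k = 0) {i₀ : Fin d}
    (hpos : 0 < hX.eigenvalues i₀) (hnonpos : ∀ i ≠ i₀, hX.eigenvalues i ≤ 0) :
    IsState (pureState (hX.eigenvectorBasis i₀) - ((hX.eigenvalues i₀)⁻¹ : ℝ) • X) := by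
  set U : Matrix (Fin d) (Fin d) ℂ := (hX.eigenvectorUnitary : Matrix (Fin d) (Fin d) ℂ)
  set ν : Fin d → ℝ := fun i =>
    (Pi.single i₀ 1 : Fin d → ℝ) i - (hX.eigenvalues i₀)⁻¹ * hX.eigenvalues i
  have hconj : pureState (hX.eigenvectorBasis i₀) - ((hX.eigenvalues i₀)⁻¹ : ℝ) • X =
      U * diagonal (RCLike.ofReal ∘ ν) * Uᴴ := by
    have hψ : pureState (hX.eigenvectorBasis i₀) = U * diagonal (Pi.single i₀ (1 : ℂ)) * Uᴴ :=
      pureState_col U i₀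
    have hdiag : diagonal (RCLike.ofReal ∘ ν) = diagonal (Pi.single i₀ (1 : ℂ)) -
        (hX.eigenvalues i₀)⁻¹ • diagonal (RCLike.ofReal ∘ hX.eigenvalues) := by
      rw [← diagonal_smul, diagonal_sub]
      congr 1
      ext i
      by_cases hi : i = i₀ <;> simp [ν, hi]
    rw [hψ, hdiag, mul_sub, sub_mul, Matrix.mul_smul, Matrix.smul_mul]
    congr 2
    exact hX.spectral_theorem
  refine ⟨?_, ?_⟩
  · rw [hconj]
    refine (posSemidef_diagonal_iff.2 fun i => ?_).mul_mul_conjTranspose_same U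
    suffices 0 ≤ ν i by simpa using this
    by_cases hi : i = i₀
    · simp [ν, hi, hpos.ne']
    · simpa [ν, hi] using mul_nonpos_of_nonneg_of_nonpos (inv_pos.2 hpos).le (hnonpos i hi)
  · have htrace : X.trace = 0 := by
      rw [hX.trace_eq_sum_eigenvalues, ← RCLike.ofReal_sum, hsum, RCLike.ofReal_zero]
    rw [trace_sub, trace_smul, trace_pureState, htrace, ← Complex.ofReal_sum,
      hX.sum_normSq_eigenvectorBasis]
    simp

lemma star_dotProduct_mulVec_eigenvectorBasis_add {i j : Fin d} (hij : i ≠ j) (c₁ c₂ : ℂ) :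
    star (c₁ • ⇑(hX.eigenvectorBasis i) + c₂ • ⇑(hX.eigenvectorBasis j)) ⬝ᵥ
        X *ᵥ (c₁ • ⇑(hX.eigenvectorBasis i) + c₂ • ⇑(hX.eigenvectorBasis j)) =
      ((Complex.normSq c₁ * hX.eigenvalues i + Complex.normSq c₂ * hX.eigenvalues j : ℝ) : ℂ) := by
  have horth (a b : Fin d) : star ⇑(hX.eigenvectorBasis a) ⬝ᵥ ⇑(hX.eigenvectorBasis b) =
      if a = b then 1 else 0 := by
    rw [dotProduct_comm, ← EuclideanSpace.inner_eq_star_dotProduct]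
    exact orthonormal_iff_ite.1 hX.eigenvectorBasis.orthonormal a b
  simp only [mulVec_add, mulVec_smul, hX.mulVec_eigenvectorBasis, star_add, star_smul,
    add_dotProduct, dotProduct_add, smul_dotProduct, dotProduct_smul, horth, hij, hij.symm,
    RCLike.real_smul_eq_coe_smul (K := ℂ)]
  simp [Complex.normSq_eq_conj_mul_self]
  ring

lemma exists_orthogonal_star_dotProduct_mulVec_pos {i j : Fin d} (hij : i ≠ j)
    (hi : 0 < hX.eigenvalues i) (hj : 0 < hX.eigenvalues j) (ψ : Fin d → ℂ) :
    ∃ w, star ψ ⬝ᵥ w = 0 ∧ 0 < star w ⬝ᵥ X *ᵥ w := by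
  set a := star ψ ⬝ᵥ ⇑(hX.eigenvectorBasis i)
  set b := star ψ ⬝ᵥ ⇑(hX.eigenvectorBasis j)
  obtain ⟨c₁, c₂, hc, hψc⟩ : ∃ c₁ c₂ : ℂ, (c₁ ≠ 0 ∨ c₂ ≠ 0) ∧ c₁ * a + c₂ * b = 0 := by
    by_cases ha : a = 0
    · exact ⟨1, 0, by simp, by simp [ha]⟩
    · exact ⟨b, -a, Or.inr (neg_ne_zero.2 ha), by ring⟩
  refine ⟨c₁ • ⇑(hX.eigenvectorBasis i) + c₂ • ⇑(hX.eigenvectorBasis j), ?_, ?_⟩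
  · simpa [dotProduct_add, dotProduct_smul] using hψc
  · rw [hX.star_dotProduct_mulVec_eigenvectorBasis_add hij, Complex.zero_lt_real]
    have h₁ := mul_nonneg (Complex.normSq_nonneg c₁) hi.le
    have h₂ := mul_nonneg (Complex.normSq_nonneg c₂) hj.le
    rcases hc with hc | hc
    · exact add_pos_of_pos_of_nonneg (mul_pos (Complex.normSq_pos.2 hc) hi) h₂
    · exact add_pos_of_nonneg_of_pos h₁ (mul_pos (Complex.normSq_pos.2 hc) hj)

lemma posEigCount_le_one_of_eq_pureState_sub {ψ : Fin d → ℂ} {ρ : Matrix (Fin d) (Fin d) ℂ}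
    (hρ : ρ.PosSemidef) (hXψρ : X = pureState ψ - ρ) : posEigCount hX ≤ 1 := by
  by_contra! htwo
  obtain ⟨i, j, hij, hi, hj⟩ := (two_le_posEigCount_iff hX).1 htwo
  obtain ⟨w, hψw, hw⟩ := hX.exists_orthogonal_star_dotProduct_mulVec_pos hij hi hj ψ
  have hXw : star w ⬝ᵥ X *ᵥ w = -(star w ⬝ᵥ ρ *ᵥ w) := by
    rw [hXψρ, sub_mulVec, dotProduct_sub, pureState_mulVec, hψw, zero_smul, dotProduct_zero,
      zero_sub]
  rw [hXw, neg_pos] at hw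
  exact (hw.trans_le (hρ.dotProduct_mulVec_nonneg w)).false

end Matrix.IsHermitian

theorem stmt5 {d l m : ℕ} (hl : 0 < l)
    (Q : Fin l → Fin m → Matrix (Fin d) (Fin d) ℂ) (hQ : IsMeasScheme Q) :
    DeterminesPure Q ↔
      ∀ (X : Matrix (Fin d) (Fin d) ℂ) (hX : X.IsHermitian),
        measMap Q X = 0 → X ≠ 0 → 2 ≤ posEigCount hX := by
  constructor
  · intro hdet X hX hXQ hX0
    by_contra! hle
    have hsum := sum_eigenvalues_eq_zero_of_measMap_eq_zero (hQ ⟨0, hl⟩).2 hX hXQ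
    obtain ⟨i₀, hpos⟩ := hX.exists_eigenvalues_pos_of_sum_eq_zero hX0 hsum
    have hnonpos (i : Fin d) (hi : i ≠ i₀) : hX.eigenvalues i ≤ 0 :=
      not_lt.1 fun hi' => hle.not_ge ((two_le_posEigCount_iff hX).2 ⟨i, i₀, hi, hi', hpos⟩)
    have hρ := hX.isState_pureState_sub_inv_smul hsum hpos hnonpos
    have heq := hdet _ (hX.sum_normSq_eigenvectorBasis i₀) _ hρ
      (by rw [measMap_sub, measMap_real_smul, hXQ, smul_zero, sub_zero])
    rw [sub_eq_self, smul_eq_zero] at heq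
    exact hX0 (heq.resolve_left (inv_ne_zero hpos.ne'))
  · intro hker ψ _ ρ hρ hmeas
    by_contra hne
    have hY := (pureState_isHermitian ψ).sub hρ.1.isHermitian
    have htwo := hker _ hY (by rw [measMap_sub, hmeas, sub_self]) (sub_ne_zero.2 (Ne.symm hne))
    have hone := hY.posEigCount_le_one_of_eq_pureState_sub hρ.1 rfl
    omega
end

section
/- For every d ≥ 1, the set { (σ − X)/‖σ − X‖ : σ, X ∈ H(d), σ positive semidefinite of rank 1, X positive semidefinite, X ≠ σ } is equal to K := {Y ∈ H(d) : λ₂(Y) ≤ 0, ‖Y‖ = 1}. -/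
open Matrix ComplexOrder

/-! If `Y = c • (σ - X)` with `c > 0`, then `c • σ - Y = c • X` is positive semidefinite. In an
eigenbasis of `Y`, the principal submatrix of `c • σ` on the eigenvectors with positive eigenvalues
dominates a positive diagonal matrix, hence is invertible; so the number of positive eigenvalues is
at most `rank σ = 1`.

Conversely, write `Y = U diag(μ) U*` with `μ j ≤ 0` for `j ≠ i₀`. Then `σ = U diag(t e_{i₀}) U*`
with `t = max (μ i₀) 1` is positive semidefinite of rank one, `X = σ - Y = U diag(t e_{i₀} - μ) U*`
is positive semidefinite, and `‖σ - X‖ = ‖Y‖ = 1`. -/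

section Frobenius

variable {m n 𝕜 : Type*} [Fintype m] [Fintype n] [RCLike 𝕜]

attribute [local instance] Matrix.frobeniusNormedAddCommGroup Matrix.frobeniusNormedSpace

theorem frobNorm_eq_norm (A : Matrix m n 𝕜) : frobNorm A = ‖A‖ := by
  rw [frobNorm, frobenius_norm_def, Real.sqrt_eq_rpow]
  simp only [Real.rpow_two]

theorem frobNorm_zero : frobNorm (0 : Matrix m n 𝕜) = 0 := by
  rw [frobNorm_eq_norm, norm_zero]

theorem frobNorm_pos {A : Matrix m n 𝕜} (hA : A ≠ 0) : 0 < frobNorm A := by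
  rwa [frobNorm_eq_norm, norm_pos_iff]

theorem frobNorm_inv_smul_self {A : Matrix m n 𝕜} (hA : A ≠ 0) :
    frobNorm ((frobNorm A)⁻¹ • A) = 1 := by
  simp only [frobNorm_eq_norm]
  exact norm_smul_inv_norm hA

end Frobenius

theorem exists_forall_ne_nonpos_of_card_pos_le_one {ι : Type*} [Fintype ι] [Nonempty ι]
    {f : ι → ℝ} (h : Fintype.card {i // 0 < f i} ≤ 1) : ∃ i₀, ∀ j ≠ i₀, f j ≤ 0 := by
  by_cases hpos : ∃ i, 0 < f i
  · obtain ⟨i₀, hi₀⟩ := hpos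
    refine ⟨i₀, fun j hj ↦ not_lt.1 fun hfj ↦ hj ?_⟩
    exact congrArg Subtype.val (Fintype.card_le_one_iff.1 h ⟨j, hfj⟩ ⟨i₀, hi₀⟩)
  · simp only [not_exists, not_lt] at hpos
    exact ⟨Classical.arbitrary ι, fun j _ ↦ hpos j⟩

namespace Matrix

variable {n 𝕜 : Type*} [Fintype n] [RCLike 𝕜]

theorem rank_real_smul {m : Type*} [Fintype m] {c : ℝ} (hc : c ≠ 0) (A : Matrix m n 𝕜) :
    (c • A).rank = A.rank := by
  rw [RCLike.real_smul_eq_coe_smul (K := 𝕜), rank_smul_of_mem_nonZeroDivisors _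
    (mem_nonZeroDivisors_of_ne_zero (RCLike.ofReal_ne_zero.2 hc))]

variable [DecidableEq n]

theorem rank_mul_mul_star_of_mem_unitary {U : Matrix n n 𝕜} (hU : U ∈ unitary (Matrix n n 𝕜))
    (A : Matrix n n 𝕜) : (U * A * star U).rank = A.rank := by
  have hUU : U * star U = 1 := Unitary.mul_star_self_of_mem hU
  rw [rank_mul_eq_left_of_isUnit_det _ _ (isUnit_det_of_left_inverse hUU),
    rank_mul_eq_right_of_isUnit_det _ _ (isUnit_det_of_right_inverse hUU)]

theorem IsHermitian.card_pos_eigenvalues_le_rank {M σ : Matrix n n 𝕜} (hM : M.IsHermitian)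
    (hσM : (σ - M).PosSemidef) : Fintype.card {i // 0 < hM.eigenvalues i} ≤ σ.rank := by
  set U : Matrix n n 𝕜 := ↑hM.eigenvectorUnitary
  set D : Matrix n n 𝕜 := diagonal (RCLike.ofReal ∘ hM.eigenvalues)
  have hdiag : star U * M * U = D := by
    simpa using hM.conjStarAlgAut_star_eigenvectorUnitary
  set S := {i // 0 < hM.eigenvalues i}
  set σ' := star U * σ * U
  have hσ'D : (σ' - D).PosSemidef := by
    rw [← hdiag, ← sub_mul, ← mul_sub]
    exact hσM.conjTranspose_mul_mul_same U
  have hpd : (σ'.submatrix (Subtype.val : S → n) Subtype.val).PosDef := by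
    have hsplit : σ'.submatrix (Subtype.val : S → n) Subtype.val =
        (σ' - D).submatrix Subtype.val Subtype.val +
          diagonal fun i : S ↦ (hM.eigenvalues i : 𝕜) := by
      ext i j
      rcases eq_or_ne i j with rfl | hij
      · simp [D]
      · simp [D, hij, Subtype.val_injective.ne hij]
    rw [hsplit]
    exact PosDef.posSemidef_add (hσ'D.submatrix _)
      (posDef_diagonal_iff.2 fun i : S ↦ RCLike.ofReal_pos.2 i.2)
  calc Fintype.card S = (σ'.submatrix (Subtype.val : S → n) Subtype.val).rank :=
        (rank_of_isUnit _ hpd.isUnit).symm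
    _ ≤ σ'.rank := rank_submatrix_le _ _ _
    _ = σ.rank := by
      simpa only [star_star] using
        rank_mul_mul_star_of_mem_unitary (Unitary.star_mem hM.eigenvectorUnitary.2) σ

theorem PosSemidef.mul_diagonal_mul_star {f : n → ℝ} (hf : 0 ≤ f) (U : Matrix n n 𝕜) :
    (U * diagonal (RCLike.ofReal ∘ f) * star U).PosSemidef :=
  (posSemidef_diagonal_iff.2 fun i ↦ RCLike.ofReal_nonneg.2 (hf i)).mul_mul_conjTranspose_same U

theorem IsHermitian.exists_posSemidef_rank_one_sub_eq [Nonempty n] {Y : Matrix n n 𝕜}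
    (hY : Y.IsHermitian) (hpos : Fintype.card {i // 0 < hY.eigenvalues i} ≤ 1) :
    ∃ σ X : Matrix n n 𝕜, σ.PosSemidef ∧ σ.rank = 1 ∧ X.PosSemidef ∧ σ - X = Y := by
  classical
  obtain ⟨i₀, hnonpos⟩ := exists_forall_ne_nonpos_of_card_pos_le_one hpos
  set μ := hY.eigenvalues
  set U : Matrix n n 𝕜 := ↑hY.eigenvectorUnitary
  -- the `max` keeps `σ` of rank one even when `μ i₀ ≤ 0`
  set g : n → ℝ := Pi.single i₀ (max (μ i₀) 1)
  have hg : 0 ≤ g := Pi.single_nonneg.2 (le_max_of_le_right zero_le_one)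
  have hgμ : 0 ≤ g - μ := fun j ↦ by
    rcases eq_or_ne j i₀ with rfl | hj
    · simp [g]
    · simp [g, hj, hnonpos j hj]
  refine ⟨U * diagonal (RCLike.ofReal ∘ g) * star U,
    U * diagonal (RCLike.ofReal ∘ (g - μ)) * star U,
    .mul_diagonal_mul_star hg U, ?_, .mul_diagonal_mul_star hgμ U, ?_⟩
  · rw [rank_mul_mul_star_of_mem_unitary hY.eigenvectorUnitary.2, rank_diagonal,
      Fintype.card_eq_one_iff]
    refine ⟨⟨i₀, by simp [g]; positivity⟩, fun ⟨j, hj⟩ ↦ Subtype.ext ?_⟩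
    by_contra hji₀
    simp [g, hji₀] at hj
  · have hdiff : diagonal (RCLike.ofReal ∘ g) - diagonal (RCLike.ofReal ∘ (g - μ)) =
        diagonal (RCLike.ofReal ∘ μ : n → 𝕜) := by
      rw [diagonal_sub]
      congr 1
      ext j
      simp
    rw [← sub_mul, ← mul_sub, hdiff]
    exact hY.spectral_theorem.symm

end Matrix

theorem stmt10 (d : ℕ) (hd : 0 < d) :
    {Y : Matrix (Fin d) (Fin d) ℂ |
        ∃ σ X : Matrix (Fin d) (Fin d) ℂ, σ.PosSemidef ∧ σ.rank = 1 ∧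
          X.PosSemidef ∧ X ≠ σ ∧ Y = (frobNorm (σ - X))⁻¹ • (σ - X)} = Kset d := by
  have : Nonempty (Fin d) := Fin.pos_iff_nonempty.1 hd
  ext Y
  constructor
  · rintro ⟨σ, X, hσ, hrank, hX, hne, rfl⟩
    have hσX : σ - X ≠ 0 := sub_ne_zero.2 hne.symm
    set c := (frobNorm (σ - X))⁻¹
    have hc : 0 < c := inv_pos.2 (frobNorm_pos hσX)
    have hH : (c • (σ - X)).IsHermitian := (hσ.1.sub hX.1).smul (IsSelfAdjoint.all c)
    have hle : (c • σ - c • (σ - X)).PosSemidef := by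
      rw [← smul_sub, sub_sub_cancel]
      exact hX.smul hc.le
    refine ⟨hH, ?_, frobNorm_inv_smul_self hσX⟩
    rw [posEigCount, Nat.card_eq_fintype_card]
    calc _ ≤ (c • σ).rank := hH.card_pos_eigenvalues_le_rank hle
      _ = 1 := by rw [rank_real_smul hc.ne', hrank]
  · rintro ⟨hH, hpos, hnorm⟩
    rw [posEigCount, Nat.card_eq_fintype_card] at hpos
    obtain ⟨σ, X, hσ, hrank, hX, rfl⟩ := hH.exists_posSemidef_rank_one_sub_eq hpos
    refine ⟨σ, X, hσ, hrank, hX, fun hXσ ↦ ?_, by rw [hnorm, inv_one, one_smul]⟩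
    rw [hXσ, sub_self, frobNorm_zero] at hnorm
    exact zero_ne_one hnorm
end

section
/- Let A be a positive semidefinite 3×3 complex matrix and let a, b, c ∈ ℂ with c ≠ 0. If A₁₁ = |a|², A₂₂ = |b|², A₃₃ = |c|², A₁₃ = a·conj(c), and A₂₃ = b·conj(c), then A₁₂ = a·conj(b). -/
open ComplexOrder

theorem stmt17 (A : Matrix (Fin 3) (Fin 3) ℂ) (hA : A.PosSemidef)
    (a b c : ℂ) (hc : c ≠ 0)
    (h11 : A 0 0 = (Complex.normSq a : ℂ)) (h22 : A 1 1 = (Complex.normSq b : ℂ))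
    (h33 : A 2 2 = (Complex.normSq c : ℂ))
    (h13 : A 0 2 = a * (starRingEnd ℂ) c) (h23 : A 1 2 = b * (starRingEnd ℂ) c) :
    A 0 1 = a * (starRingEnd ℂ) b := by
  set w : Fin 3 → ℂ := ![0, (starRingEnd ℂ) c, -(starRingEnd ℂ) b] with hw
  have h32 : A 2 1 = (starRingEnd ℂ) b * c := by
    have h := hA.isHermitian.apply 1 2
    rw [h23] at h
    have h' := congrArg star h
    simpa [mul_comm] using h'
  have hzero : dotProduct (star w) (A.mulVec w) = 0 := by
    simp only [dotProduct, Matrix.mulVec, Fin.sum_univ_three, hw,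
      Pi.star_apply, Matrix.cons_val_zero, Matrix.cons_val_one, Matrix.head_cons,
      Matrix.cons_val_two, Matrix.tail_cons]
    rw [h22, h33, h23, h32]
    simp [Complex.normSq_eq_conj_mul_self]
    ring
  have hAw : A.mulVec w = 0 := (hA.dotProduct_mulVec_zero_iff w).mp hzero
  have h0 : A.mulVec w 0 = 0 := by rw [hAw]; rfl
  simp only [Matrix.mulVec, dotProduct, Fin.sum_univ_three, hw,
    Matrix.cons_val_zero, Matrix.cons_val_one, Matrix.head_cons,
    Matrix.cons_val_two, Matrix.tail_cons, h13] at h0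
  have hc' : (starRingEnd ℂ) c ≠ 0 := by simpa using hc
  apply mul_right_cancel₀ hc'
  linear_combination h0
end
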